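/- arXiv:1205.1166 — 6 statements merged into one kernel-verified Lean document; each statement's English description precedes it below -/
import Mathlib

section
/- Let A be an n×n real matrix with ‖e^{At}‖ ≤ N e^{-ωt} for t ≥ 0, and let g : ℝ^m × ℝ^n → ℝ^n be continuous, bounded by M₀, and Lipschitz with ‖g(x,y₁) − g(x,y₂)‖ ≤ L₃‖y₁ − y₂‖ for all x, y₁, y₂. If N L₃ − ω < 0, then for every bounded continuous function x : ℝ → ℝ^m there exists a unique bounded solution y : ℝ → ℝ^n of y' = Ay + g(x(t), y), and it satisfies the integral equation y(t) = ∫_{-∞}^{t} e^{A(t-s)} g(x(s), y(s)) ds. -/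
/-!
A bounded solution of `y' = B y + G(t, y)` is the same thing as a bounded continuous fixed point
of the Duhamel map `y ↦ ∫_{-∞}^t e^{(t-s)B} G(s, y(s)) ds`. Differentiating the integral gives the
equation; conversely, integrating `d/ds (e^{(t-s)B} y(s)) = e^{(t-s)B} G(s, y(s))` over `(-∞, t]`
recovers `y(t)`, the boundary term at `-∞` vanishing because `y` is bounded and
`‖e^{τB}‖ ≤ N e^{-ωτ}`. The same estimate makes the Duhamel map `N L / ω`-Lipschitz in the sup
norm, so for `N L < ω` the Banach fixed point theorem gives existence and uniqueness.
-/

open MeasureTheory Set Filter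

abbrev Eu (k : ℕ) := EuclideanSpace ℝ (Fin k)

noncomputable def eAt {n : ℕ} (A : Matrix (Fin n) (Fin n) ℝ) (t : ℝ) :
    Eu n →L[ℝ] Eu n :=
  Matrix.toEuclideanCLM (𝕜 := ℝ) (NormedSpace.exp (t • A))

noncomputable def mulA {n : ℕ} (A : Matrix (Fin n) (Fin n) ℝ) : Eu n →L[ℝ] Eu n :=
  Matrix.toEuclideanCLM (𝕜 := ℝ) A

open NormedSpace Topology BoundedContinuousFunction
open scoped NNReal

variable {E : Type*} [NormedAddCommGroup E] [NormedSpace ℝ E]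

def IsExpStable (B : E →L[ℝ] E) (N ω : ℝ) : Prop :=
  ∀ t : ℝ, 0 ≤ t → ‖exp (t • B)‖ ≤ N * Real.exp (-ω * t)

noncomputable def duhamelIntegral (B : E →L[ℝ] E) (f : ℝ → E) (t : ℝ) : E :=
  ∫ s in Iic t, exp ((t - s) • B) (f s)

theorem exp_smul_apply_comm (B : E →L[ℝ] E) (t : ℝ) (v : E) :
    exp (t • B) (B v) = B (exp (t • B) v) :=
  DFunLike.congr_fun ((Commute.refl B).smul_left t).exp_left.eq v

namespace IsExpStable

variable {B : E →L[ℝ] E} {N ω : ℝ} (hB : IsExpStable B N ω)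
include hB

theorem nonneg : 0 ≤ N := by
  simpa using (norm_nonneg _).trans (hB 0 le_rfl)

theorem norm_exp_smul_sub_apply_le {s t C : ℝ} (hst : s ≤ t) {v : E} (hv : ‖v‖ ≤ C) :
    ‖exp ((t - s) • B) v‖ ≤ N * C * Real.exp (-ω * t) * Real.exp (ω * s) := by
  have hN := hB.nonneg
  calc ‖exp ((t - s) • B) v‖ ≤ ‖exp ((t - s) • B)‖ * ‖v‖ := ContinuousLinearMap.le_opNorm _ _
    _ ≤ N * Real.exp (-ω * (t - s)) * C :=
        mul_le_mul (hB _ (sub_nonneg.2 hst)) hv (norm_nonneg _) (by positivity)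
    _ = N * C * Real.exp (-ω * t) * Real.exp (ω * s) := by
        rw [show -ω * (t - s) = -ω * t + ω * s by ring, Real.exp_add]; ring

theorem norm_duhamelIntegral_le (hω : 0 < ω) {f : ℝ → E} {C : ℝ} (hf : ∀ s, ‖f s‖ ≤ C)
    (t : ℝ) : ‖duhamelIntegral B f t‖ ≤ N * C / ω :=
  calc ‖duhamelIntegral B f t‖
      ≤ ∫ s in Iic t, N * C * Real.exp (-ω * t) * Real.exp (ω * s) :=
        norm_integral_le_of_norm_le
          ((integrableOn_exp_mul_Iic hω t).const_mul (N * C * Real.exp (-ω * t)))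
          (ae_restrict_of_forall_mem measurableSet_Iic fun _ hs =>
            hB.norm_exp_smul_sub_apply_le hs (hf _))
    _ = N * C / ω := by
        rw [integral_const_mul, integral_exp_mul_Iic hω, mul_div_assoc', mul_assoc,
          ← Real.exp_add]
        simp

end IsExpStable

variable [CompleteSpace E]

theorem hasDerivAt_setIntegral_Iic {h : ℝ → E} (hc : Continuous h)
    (hi : ∀ t, IntegrableOn h (Iic t)) (t : ℝ) :
    HasDerivAt (fun u => ∫ s in Iic u, h s) (h t) t := by
  have hsplit : (fun u => ∫ s in Iic u, h s) =
      fun u => (∫ s in Iic 0, h s) + ∫ s in 0..u, h s := by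
    funext u
    rw [← intervalIntegral.integral_Iic_sub_Iic (hi 0) (hi u), add_sub_cancel]
  rw [hsplit]
  exact (intervalIntegral.integral_hasDerivAt_right (hc.intervalIntegrable _ _)
    (hc.stronglyMeasurableAtFilter _ _) hc.continuousAt).const_add _

section Semigroup

variable (B : E →L[ℝ] E)

theorem continuous_exp_smul : Continuous fun t : ℝ => exp (t • B) :=
  (differentiable_exp_smul_const ℝ B).continuous

theorem exp_smul_apply_exp_smul_apply (a b : ℝ) (v : E) :
    exp (a • B) (exp (b • B) v) = exp ((a + b) • B) v := by
  rw [add_smul, exp_add_of_commute_of_mem_ball (𝕂 := ℝ)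
    (((Commute.refl B).smul_left a).smul_right b)] <;> simp [expSeries_radius_eq_top]

end Semigroup

namespace IsExpStable

variable {B : E →L[ℝ] E} {N ω : ℝ} (hB : IsExpStable B N ω)
include hB

theorem integrableOn_Iic_exp_smul_sub_apply (hω : 0 < ω) {f : ℝ → E} {C : ℝ}
    (hfc : Continuous f) (hf : ∀ s, ‖f s‖ ≤ C) (t : ℝ) :
    IntegrableOn (fun s => exp ((t - s) • B) (f s)) (Iic t) :=
  ((integrableOn_exp_mul_Iic hω t).const_mul (N * C * Real.exp (-ω * t))).mono'
    (((continuous_exp_smul B).comp (continuous_const.sub continuous_id)).clm_apply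
      hfc).aestronglyMeasurable
    (ae_restrict_of_forall_mem measurableSet_Iic fun _ hs =>
      hB.norm_exp_smul_sub_apply_le hs (hf _))

theorem dist_duhamelIntegral_le (hω : 0 < ω) {f g : ℝ → E} {M C : ℝ} (hfc : Continuous f)
    (hgc : Continuous g) (hfM : ∀ s, ‖f s‖ ≤ M) (hgM : ∀ s, ‖g s‖ ≤ M)
    (hfg : ∀ s, dist (f s) (g s) ≤ C) (t : ℝ) :
    dist (duhamelIntegral B f t) (duhamelIntegral B g t) ≤ N * C / ω := by
  have hsub : duhamelIntegral B f t - duhamelIntegral B g t = duhamelIntegral B (f - g) t := by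
    simp only [duhamelIntegral, Pi.sub_apply, map_sub]
    exact (integral_sub (hB.integrableOn_Iic_exp_smul_sub_apply hω hfc hfM t)
      (hB.integrableOn_Iic_exp_smul_sub_apply hω hgc hgM t)).symm
  rw [dist_eq_norm, hsub]
  exact hB.norm_duhamelIntegral_le hω (fun s => (dist_eq_norm (f s) (g s)).symm.trans_le (hfg s)) t

theorem hasDerivAt_duhamelIntegral (hω : 0 < ω) {f : ℝ → E} {C : ℝ} (hfc : Continuous f)
    (hfC : ∀ s, ‖f s‖ ≤ C) (t : ℝ) :
    HasDerivAt (duhamelIntegral B f) (B (duhamelIntegral B f t) + f t) t := by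
  -- factor `e^{(t-s)B} = e^{tB} e^{-sB}` out of the integral and use the product rule
  have hwi : ∀ u, IntegrableOn (fun s => exp ((-s) • B) (f s)) (Iic u) := by
    intro u
    have hshift : (fun s => exp ((-s) • B) (f s)) =
        fun s => exp ((u - s) • B) (exp ((-u) • B) (f s)) := by
      funext s
      rw [exp_smul_apply_exp_smul_apply, show u - s + -u = -s by ring]
    rw [hshift]
    exact hB.integrableOn_Iic_exp_smul_sub_apply hω
      ((exp ((-u) • B)).continuous.comp hfc)
      (fun s => (exp ((-u) • B)).le_opNorm_of_le (hfC s)) u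
  have hfac : duhamelIntegral B f =
      fun u => exp (u • B) (∫ s in Iic u, exp ((-s) • B) (f s)) := by
    funext u
    rw [duhamelIntegral, ← ContinuousLinearMap.integral_comp_comm _ (hwi u)]
    refine setIntegral_congr_fun measurableSet_Iic fun s _ => ?_
    rw [exp_smul_apply_exp_smul_apply, sub_eq_add_neg]
  have hw : HasDerivAt (fun u => ∫ s in Iic u, exp ((-s) • B) (f s)) (exp ((-t) • B) (f t)) t :=
    hasDerivAt_setIntegral_Iic
      (((continuous_exp_smul B).comp continuous_neg).clm_apply hfc) hwi t
  rw [hfac]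
  refine ((hasDerivAt_exp_smul_const' B t).clm_apply hw).congr_deriv ?_
  rw [mul_apply_eq_comp, exp_smul_apply_exp_smul_apply, add_neg_cancel, zero_smul, exp_zero,
    one_apply_eq_self]

theorem eq_duhamelIntegral_of_hasDerivAt (hω : 0 < ω) {f : ℝ → E} {M : ℝ}
    (hfc : Continuous f) (hfM : ∀ s, ‖f s‖ ≤ M) {z : ℝ → E}
    (hzb : ∃ C, ∀ t, ‖z t‖ ≤ C) (hz : ∀ t, HasDerivAt z (B (z t) + f t) t) :
    z = duhamelIntegral B f := by
  obtain ⟨C, hC⟩ := hzb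
  funext t
  have hφ : ∀ s, HasDerivAt (fun u => exp ((t - u) • B) (z u))
      (exp ((t - s) • B) (f s)) s := by
    intro s
    have he : HasDerivAt (fun u => exp ((t - u) • B)) ((-1 : ℝ) • (B * exp ((t - s) • B))) s :=
      (hasDerivAt_exp_smul_const' B (t - s)).scomp s ((hasDerivAt_id s).const_sub t)
    convert he.clm_apply (hz s) using 1
    rw [map_add, exp_smul_apply_comm, _root_.smul_apply, mul_apply_eq_comp]
    module
  have hdecay : Tendsto (fun u => N * C * Real.exp (-ω * t) * Real.exp (ω * u)) atBot (𝓝 0) := by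
    simpa using (Real.tendsto_exp_atBot.comp (tendsto_id.const_mul_atBot hω)).const_mul
      (N * C * Real.exp (-ω * t))
  have hlim : Tendsto (fun u => exp ((t - u) • B) (z u)) atBot (𝓝 0) := by
    refine squeeze_zero_norm' ?_ hdecay
    filter_upwards [eventually_le_atBot t] with u hu
    exact hB.norm_exp_smul_sub_apply_le hu (hC u)
  have := integral_Iic_of_hasDerivAt_of_tendsto' (fun s _ => hφ s)
    (hB.integrableOn_Iic_exp_smul_sub_apply hω hfc hfM t) hlim
  simpa [duhamelIntegral] using this.symm

theorem continuous_duhamelIntegral (hω : 0 < ω) {f : ℝ → E} {C : ℝ} (hfc : Continuous f)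
    (hfC : ∀ s, ‖f s‖ ≤ C) : Continuous (duhamelIntegral B f) :=
  continuous_iff_continuousAt.2 fun t => (hB.hasDerivAt_duhamelIntegral hω hfc hfC t).continuousAt

theorem existsUnique_eq_duhamelIntegral (hω : 0 < ω) {G : ℝ → E → E} {M : ℝ} {K : ℝ≥0}
    (hGc : Continuous fun p : ℝ × E => G p.1 p.2) (hGM : ∀ t y, ‖G t y‖ ≤ M)
    (hGK : ∀ t, LipschitzWith K (G t)) (hNK : N * K < ω) :
    ∃! y : ℝ →ᵇ E, ⇑y = duhamelIntegral B (fun s => G s (y s)) := by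
  have hcont (y : ℝ →ᵇ E) : Continuous fun s => G s (y s) :=
    hGc.comp (continuous_id.prodMk y.continuous)
  let T (y : ℝ →ᵇ E) : ℝ →ᵇ E :=
    .ofNormedAddCommGroup (duhamelIntegral B fun s => G s (y s))
      (hB.continuous_duhamelIntegral hω (hcont y) (hGM · _)) _
      (hB.norm_duhamelIntegral_le hω (hGM · _))
  have hT : ContractingWith (N * K / ω).toNNReal T := by
    refine ⟨Real.toNNReal_lt_one.2 ((div_lt_one hω).2 hNK), LipschitzWith.of_dist_le' ?_⟩
    intro y₁ y₂
    refine dist_le_iff_of_nonempty.2 fun t => ?_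
    calc dist (T y₁ t) (T y₂ t) ≤ N * (K * dist y₁ y₂) / ω :=
          hB.dist_duhamelIntegral_le hω (hcont y₁) (hcont y₂) (hGM · _) (hGM · _)
            (fun s => ((hGK s).dist_le_mul _ _).trans (by gcongr; exact dist_coe_le_dist s)) t
      _ = N * K / ω * dist y₁ y₂ := by ring
  refine ⟨hT.fixedPoint T, congrArg DFunLike.coe hT.fixedPoint_isFixedPt.symm, fun y hy => ?_⟩
  exact hT.fixedPoint_unique (DFunLike.coe_injective hy.symm)

theorem exists_unique_bounded_solution (hω : 0 < ω) {G : ℝ → E → E} {M : ℝ} {K : ℝ≥0}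
    (hGc : Continuous fun p : ℝ × E => G p.1 p.2) (hGM : ∀ t y, ‖G t y‖ ≤ M)
    (hGK : ∀ t, LipschitzWith K (G t)) (hNK : N * K < ω) :
    ∃ y : ℝ → E,
      ((∃ C, ∀ t, ‖y t‖ ≤ C) ∧ (∀ t, HasDerivAt y (B (y t) + G t (y t)) t) ∧
        ∀ t, y t = duhamelIntegral B (fun s => G s (y s)) t) ∧
      ∀ z : ℝ → E, (∃ C, ∀ t, ‖z t‖ ≤ C) →
        (∀ t, HasDerivAt z (B (z t) + G t (z t)) t) → z = y := by
  obtain ⟨y, hy, huniq⟩ := hB.existsUnique_eq_duhamelIntegral hω hGc hGM hGK hNK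
  have hcont (y : ℝ →ᵇ E) : Continuous fun s => G s (y s) :=
    hGc.comp (continuous_id.prodMk y.continuous)
  refine ⟨y, ⟨⟨‖y‖, y.norm_coe_le_norm⟩, fun t => ?_, congrFun hy⟩, ?_⟩
  · have h := hB.hasDerivAt_duhamelIntegral hω (hcont y) (hGM · _) t
    rwa [← hy] at h
  rintro z ⟨C, hzC⟩ hz
  let zb : ℝ →ᵇ E := .ofNormedAddCommGroup z
    (continuous_iff_continuousAt.2 fun t => (hz t).continuousAt) C hzC
  have := huniq zb (hB.eq_duhamelIntegral_of_hasDerivAt hω (hcont zb) (hGM · _) ⟨C, hzC⟩ hz)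
  exact congrArg DFunLike.coe this

end IsExpStable

open scoped Matrix.Norms.L2Operator in
theorem eAt_eq_exp_smul_mulA {n : ℕ} (A : Matrix (Fin n) (Fin n) ℝ) (t : ℝ) :
    eAt A t = exp (t • mulA A) := by
  rw [eAt, mulA, ← map_smul]
  refine map_exp_of_mem_ball (𝕂 := ℝ) _ ?_ _ ?_
  · exact (AddMonoidHomClass.isometry_of_norm _ (Matrix.cstar_norm_def · |>.symm)).continuous
  · simp [expSeries_radius_eq_top]

theorem stmt2_general {m n : ℕ} (A : Matrix (Fin n) (Fin n) ℝ) (N ω M₀ L₃ : ℝ)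
    (hω : 0 < ω)
    (hA : ∀ t : ℝ, 0 ≤ t → ‖eAt A t‖ ≤ N * Real.exp (-ω * t))
    (g : Eu m → Eu n → Eu n)
    (hgc : Continuous fun p : Eu m × Eu n => g p.1 p.2)
    (hgb : ∀ x y, ‖g x y‖ ≤ M₀)
    (hgl : ∀ x y₁ y₂, ‖g x y₁ - g x y₂‖ ≤ L₃ * ‖y₁ - y₂‖)
    (hcond : N * L₃ - ω < 0)
    (x : ℝ → Eu m) (hxc : Continuous x) :
    ∃ y : ℝ → Eu n,
      ((∃ B, ∀ t, ‖y t‖ ≤ B) ∧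
        (∀ t, HasDerivAt y (mulA A (y t) + g (x t) (y t)) t) ∧
        ∀ t, y t = ∫ s in Iic t, eAt A (t - s) (g (x s) (y s))) ∧
      ∀ z : ℝ → Eu n,
        (∃ B, ∀ t, ‖z t‖ ≤ B) →
        (∀ t, HasDerivAt z (mulA A (z t) + g (x t) (z t)) t) →
        z = y := by
  have hB : IsExpStable (mulA A) N ω := fun t ht => eAt_eq_exp_smul_mulA A t ▸ hA t ht
  have hGK (t : ℝ) : LipschitzWith L₃.toNNReal (g (x t)) :=
    LipschitzWith.of_dist_le' fun y₁ y₂ => by simpa only [dist_eq_norm] using hgl (x t) y₁ y₂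
  have hNK : N * L₃.toNNReal < ω := by
    rw [Real.coe_toNNReal', mul_max_of_nonneg _ _ hB.nonneg, mul_zero]
    exact max_lt (by linarith) hω
  simpa only [duhamelIntegral, eAt_eq_exp_smul_mulA] using
    hB.exists_unique_bounded_solution hω (hgc.comp (hxc.prodMap continuous_id)) (fun t => hgb (x t))
      hGK hNK

/-- Existence and uniqueness of the bounded solution of y' = Ay + g(x(t),y),
together with its integral representation. -/
theorem stmt2 {m n : ℕ} (A : Matrix (Fin n) (Fin n) ℝ) (N ω M₀ L₃ : ℝ)
    (hN : 0 < N) (hω : 0 < ω)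
    (hA : ∀ t : ℝ, 0 ≤ t → ‖eAt A t‖ ≤ N * Real.exp (-ω * t))
    (g : Eu m → Eu n → Eu n)
    (hgc : Continuous fun p : Eu m × Eu n => g p.1 p.2)
    (hgb : ∀ x y, ‖g x y‖ ≤ M₀)
    (hgl : ∀ x y₁ y₂, ‖g x y₁ - g x y₂‖ ≤ L₃ * ‖y₁ - y₂‖)
    (hcond : N * L₃ - ω < 0)
    (x : ℝ → Eu m) (hxc : Continuous x) (hxb : ∃ H, ∀ t, ‖x t‖ ≤ H) :
    ∃ y : ℝ → Eu n,
      ((∃ B, ∀ t, ‖y t‖ ≤ B) ∧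
        (∀ t, HasDerivAt y (mulA A (y t) + g (x t) (y t)) t) ∧
        ∀ t, y t = ∫ s in Iic t, eAt A (t - s) (g (x s) (y s))) ∧
      ∀ z : ℝ → Eu n,
        (∃ B, ∀ t, ‖z t‖ ≤ B) →
        (∀ t, HasDerivAt z (mulA A (z t) + g (x t) (z t)) t) →
        z = y :=
  stmt2_general A N ω M₀ L₃ hω hA g hgc hgb hgl hcond x hxc
end

section
/- Under assumptions (A5) and (A7), if x : ℝ → ℝ^m and x̄ : ℝ → ℝ^m are bounded continuous functions with ‖x(t) − x̄(t)‖ → 0 as t → ∞, and y, ȳ are the corresponding unique bounded solutions of y' = Ay + g(x(t), y) and ȳ' = Aȳ + g(x̄(t), ȳ), then ‖y(t) − ȳ(t)‖ → 0 as t → ∞. -/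
open MeasureTheory Set Filter

/-!
With `u = y - ȳ` one has `u t = ∫_{-∞}^t e^{A(t-s)} G s ds` for
`G s = g (x s) (y s) - g (x̄ s) (ȳ s)`, and `‖G s‖ ≤ L₂ ‖x s - x̄ s‖ + L₃ ‖u s‖`.
Splitting the integral at a large time `T`, the part before `T` decays like `e^{-ω(t-T)}`
and the part after `T` is at most `(N/ω) sup_{s ≥ T} ‖G s‖`. Hence `ℓ = limsup ‖u‖`
satisfies `ℓ ≤ (N L₃ / ω) ℓ`, and `N L₃ < ω` forces `ℓ = 0`.
-/
section
attribute [local instance] Matrix.linftyOpNormedRing Matrix.linftyOpNormedAlgebra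
  Matrix.linftyOpNormedAddCommGroup

lemma continuous_eAt {n : ℕ} (A : Matrix (Fin n) (Fin n) ℝ) : Continuous (eAt A) :=
  (Matrix.toEuclideanCLM (𝕜 := ℝ) (n := Fin n)).toAlgEquiv.toLinearEquiv.toLinearMap
    |>.continuous_of_finiteDimensional.comp
      (NormedSpace.exp_continuous.comp (continuous_id.smul continuous_const))
end

section ExpKernel

variable {E : Type*} [NormedAddCommGroup E] [NormedSpace ℝ E]
  {K : ℝ → E →L[ℝ] E} {N ω : ℝ}

lemma norm_apply_le_of_exp_bound (hK : ∀ r, 0 ≤ r → ‖K r‖ ≤ N * Real.exp (-ω * r))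
    {s t c : ℝ} {v : E} (hst : s ≤ t) (hv : ‖v‖ ≤ c) :
    ‖K (t - s) v‖ ≤ N * c * Real.exp (-ω * t) * Real.exp (ω * s) := by
  have hKts := hK (t - s) (sub_nonneg.2 hst)
  calc ‖K (t - s) v‖ ≤ ‖K (t - s)‖ * ‖v‖ := (K (t - s)).le_opNorm v
    _ ≤ N * Real.exp (-ω * (t - s)) * c :=
      mul_le_mul hKts hv (norm_nonneg v) ((norm_nonneg _).trans hKts)
    _ = N * c * Real.exp (-ω * t) * Real.exp (ω * s) := by
      rw [show -ω * (t - s) = -ω * t + ω * s by ring, Real.exp_add]; ring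

lemma integrableOn_Iic_of_exp_bound (hKc : Continuous K)
    (hK : ∀ r, 0 ≤ r → ‖K r‖ ≤ N * Real.exp (-ω * r)) (hω : 0 < ω) {w : ℝ → E}
    (hw : Continuous w) {C : ℝ} (hC : ∀ s, ‖w s‖ ≤ C) (t : ℝ) :
    IntegrableOn (fun s => K (t - s) (w s)) (Iic t) := by
  refine ((integrableOn_exp_mul_Iic hω t).const_mul (N * C * Real.exp (-ω * t))).mono'
    ((hKc.comp (continuous_const.sub continuous_id)).clm_apply hw).aestronglyMeasurable ?_
  exact (ae_restrict_iff' measurableSet_Iic).2 <| .of_forall fun s hs =>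
    norm_apply_le_of_exp_bound hK hs (hC s)

lemma norm_integral_Iic_le_of_exp_bound (hKc : Continuous K)
    (hK : ∀ r, 0 ≤ r → ‖K r‖ ≤ N * Real.exp (-ω * r)) (hω : 0 < ω) {w : ℝ → E}
    (hw : Continuous w) {C c T t : ℝ} (hC : ∀ s, ‖w s‖ ≤ C) (hc : ∀ s, T ≤ s → ‖w s‖ ≤ c)
    (hTt : T ≤ t) :
    ‖∫ s in Iic t, K (t - s) (w s)‖ ≤ N * C / ω * Real.exp (-ω * (t - T)) + N * c / ω := by
  have hint : IntegrableOn (fun s => ‖K (t - s) (w s)‖) (Iic t) :=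
    (integrableOn_Iic_of_exp_bound hKc hK hω hw hC t).norm
  have hexp (a : ℝ) : IntegrableOn (fun s => Real.exp (ω * s)) (Iic a) :=
    integrableOn_exp_mul_Iic hω a
  have hN : 0 ≤ N := by simpa using (norm_nonneg _).trans (hK 0 le_rfl)
  have hc0 : 0 ≤ c := (norm_nonneg _).trans (hc t hTt)
  have hbefore : ∫ s in Iic T, ‖K (t - s) (w s)‖ ≤ N * C / ω * Real.exp (-ω * (t - T)) :=
    calc ∫ s in Iic T, ‖K (t - s) (w s)‖
        ≤ ∫ s in Iic T, N * C * Real.exp (-ω * t) * Real.exp (ω * s) :=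
          setIntegral_mono_on (hint.mono_set (Iic_subset_Iic.2 hTt)) ((hexp T).const_mul _)
            measurableSet_Iic fun s hs => norm_apply_le_of_exp_bound hK (hs.trans hTt) (hC s)
      _ = N * C / ω * Real.exp (-ω * (t - T)) := by
          rw [integral_const_mul, integral_exp_mul_Iic hω,
            show -ω * (t - T) = -ω * t + ω * T by ring, Real.exp_add]
          ring
  have hafter : ∫ s in Ioc T t, ‖K (t - s) (w s)‖ ≤ N * c / ω :=
    calc ∫ s in Ioc T t, ‖K (t - s) (w s)‖
        ≤ ∫ s in Ioc T t, N * c * Real.exp (-ω * t) * Real.exp (ω * s) :=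
          setIntegral_mono_on (hint.mono_set Ioc_subset_Iic_self)
            (IntegrableOn.mono_set ((hexp t).const_mul _) Ioc_subset_Iic_self) measurableSet_Ioc
            fun s hs => norm_apply_le_of_exp_bound hK hs.2 (hc s hs.1.le)
      _ ≤ ∫ s in Iic t, N * c * Real.exp (-ω * t) * Real.exp (ω * s) :=
          setIntegral_mono_set ((hexp t).const_mul _) (.of_forall fun s => by positivity)
            Ioc_subset_Iic_self.eventuallyLE
      _ = N * c / ω := by
          rw [integral_const_mul, integral_exp_mul_Iic hω, mul_assoc, ← mul_div_assoc,
            ← Real.exp_add, neg_mul, neg_add_cancel, Real.exp_zero]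
          ring
  calc ‖∫ s in Iic t, K (t - s) (w s)‖ ≤ ∫ s in Iic t, ‖K (t - s) (w s)‖ :=
        norm_integral_le_integral_norm _
    _ = (∫ s in Iic T, ‖K (t - s) (w s)‖) + ∫ s in Ioc T t, ‖K (t - s) (w s)‖ := by
        rw [← setIntegral_union (Iic_disjoint_Ioc le_rfl) measurableSet_Ioc
          (hint.mono_set (Iic_subset_Iic.2 hTt)) (hint.mono_set Ioc_subset_Iic_self),
          Iic_union_Ioc_eq_Iic hTt]
    _ ≤ _ := add_le_add hbefore hafter

lemma eventually_norm_integral_Iic_le_of_exp_bound (hKc : Continuous K)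
    (hK : ∀ r, 0 ≤ r → ‖K r‖ ≤ N * Real.exp (-ω * r)) (hω : 0 < ω) {w : ℝ → E}
    (hw : Continuous w) {C c δ : ℝ} (hC : ∀ s, ‖w s‖ ≤ C) (hc : ∀ᶠ s in atTop, ‖w s‖ ≤ c)
    (hδ : 0 < δ) :
    ∀ᶠ t in atTop, ‖∫ s in Iic t, K (t - s) (w s)‖ ≤ N * c / ω + δ := by
  obtain ⟨T, hT⟩ := eventually_atTop.1 hc
  have hdecay : Tendsto (fun t => N * C / ω * Real.exp (-ω * (t - T))) atTop (nhds 0) := by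
    simpa [sub_eq_add_neg] using ((Real.tendsto_exp_atBot.comp ((tendsto_const_mul_atBot_of_neg
      (neg_lt_zero.2 hω)).2 (tendsto_atTop_add_const_right _ (-T) tendsto_id))).const_mul
      (N * C / ω))
  filter_upwards [hdecay.eventually_le_const hδ, eventually_ge_atTop T] with t hdt hTt
  linarith [norm_integral_Iic_le_of_exp_bound hKc hK hω hw hC hT hTt]

end ExpKernel

lemma tendsto_zero_of_eventually_le_mul_add {α : Type*} {l : Filter α} [l.NeBot]
    {φ : α → ℝ} {p q B : ℝ} (h0 : ∀ a, 0 ≤ φ a) (hB : ∀ a, φ a ≤ B) (hq : q < 1)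
    (h : ∀ K, (∀ᶠ a in l, φ a ≤ K) → ∀ δ > 0, ∀ᶠ a in l, φ a ≤ q * K + p * δ) :
    Tendsto φ l (nhds 0) := by
  have hbdd : IsBoundedUnder (· ≤ ·) l φ := isBoundedUnder_of ⟨B, hB⟩
  have hcobdd : IsCoboundedUnder (· ≤ ·) l φ :=
    (isBoundedUnder_of ⟨0, h0⟩ : IsBoundedUnder (· ≥ ·) l φ).isCoboundedUnder_le
  have hstep : ∀ δ > 0, limsup φ l ≤ q * (limsup φ l + δ) + p * δ := fun δ hδ =>
    limsup_le_of_le hcobdd <| h _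
      ((eventually_lt_of_limsup_lt (lt_add_of_pos_right _ hδ) hbdd).mono fun _ ha => ha.le) δ hδ
  have hlimsup : limsup φ l ≤ 0 := by
    have : limsup φ l * (1 - q) ≤ 0 := by
      refine ge_of_tendsto (f := fun δ => (q + p) * δ) (x := nhdsWithin 0 (Ioi 0)) ?_ ?_
      · simpa using ((continuous_const_mul (q + p)).tendsto 0).mono_left nhdsWithin_le_nhds
      · filter_upwards [self_mem_nhdsWithin] with δ hδ
        linarith [hstep δ hδ]
    nlinarith
  exact tendsto_of_le_liminf_of_limsup_le
    (le_liminf_of_le hbdd.isCoboundedUnder_ge (.of_forall h0)) hlimsup hbdd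
    (isBoundedUnder_of ⟨0, h0⟩)

lemma norm_sub_le_of_lipschitz_left_right {X Y Z : Type*} [SeminormedAddCommGroup X]
    [SeminormedAddCommGroup Y] [SeminormedAddCommGroup Z] {L₂ L₃ : ℝ} {g : X → Y → Z}
    (hg₂ : ∀ x₁ x₂ y, ‖g x₁ y - g x₂ y‖ ≤ L₂ * ‖x₁ - x₂‖)
    (hg₃ : ∀ x y₁ y₂, ‖g x y₁ - g x y₂‖ ≤ L₃ * ‖y₁ - y₂‖) (x₁ x₂ : X) (y₁ y₂ : Y) :
    ‖g x₁ y₁ - g x₂ y₂‖ ≤ L₂ * ‖x₁ - x₂‖ + L₃ * ‖y₁ - y₂‖ :=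
  (norm_sub_le_norm_sub_add_norm_sub _ (g x₂ y₁) _).trans (add_le_add (hg₂ _ _ _) (hg₃ _ _ _))

theorem stmt3_general {m n : ℕ} (A : Matrix (Fin n) (Fin n) ℝ) (N ω M₀ L₂ L₃ : ℝ)
    (hω : 0 < ω) (hL₃ : 0 < L₃)
    (hA : ∀ t : ℝ, 0 ≤ t → ‖eAt A t‖ ≤ N * Real.exp (-ω * t))
    (g : Eu m → Eu n → Eu n)
    (hgc : Continuous fun p : Eu m × Eu n => g p.1 p.2)
    (hgb : ∀ x y, ‖g x y‖ ≤ M₀)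
    (hg₂ : ∀ x₁ x₂ y, ‖g x₁ y - g x₂ y‖ ≤ L₂ * ‖x₁ - x₂‖)
    (hg₃ : ∀ x y₁ y₂, ‖g x y₁ - g x y₂‖ ≤ L₃ * ‖y₁ - y₂‖)
    (hcond : N * L₃ - ω < 0)
    (x xb : ℝ → Eu m) (hxc : Continuous x) (hxbc : Continuous xb)
    (hconv : Tendsto (fun t => ‖x t - xb t‖) atTop (nhds 0))
    (y yb : ℝ → Eu n)
    (hyB : ∃ B, ∀ t, ‖y t‖ ≤ B) (hybB : ∃ B, ∀ t, ‖yb t‖ ≤ B)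
    (hy : ∀ t, HasDerivAt y (mulA A (y t) + g (x t) (y t)) t)
    (hyint : ∀ t, y t = ∫ s in Iic t, eAt A (t - s) (g (x s) (y s)))
    (hyb : ∀ t, HasDerivAt yb (mulA A (yb t) + g (xb t) (yb t)) t)
    (hybint : ∀ t, yb t = ∫ s in Iic t, eAt A (t - s) (g (xb s) (yb s))) :
    Tendsto (fun t => ‖y t - yb t‖) atTop (nhds 0) := by
  have hyc : Continuous y := continuous_iff_continuousAt.2 fun t => (hy t).continuousAt
  have hybc : Continuous yb := continuous_iff_continuousAt.2 fun t => (hyb t).continuousAt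
  have hgxy := hgc.comp (hxc.prodMk hyc)
  have hgxyb := hgc.comp (hxbc.prodMk hybc)
  set G : ℝ → Eu n := fun s => g (x s) (y s) - g (xb s) (yb s)
  have hGbdd (s : ℝ) : ‖G s‖ ≤ M₀ + M₀ := norm_sub_le_of_le (hgb _ _) (hgb _ _)
  have hrepr (t : ℝ) : y t - yb t = ∫ s in Iic t, eAt A (t - s) (G s) := by
    simp only [G, map_sub]
    rw [hyint t, hybint t]
    exact (integral_sub
      (integrableOn_Iic_of_exp_bound (continuous_eAt A) hA hω hgxy (fun s => hgb _ _) t)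
      (integrableOn_Iic_of_exp_bound (continuous_eAt A) hA hω hgxyb (fun s => hgb _ _) t)).symm
  obtain ⟨B₁, hB₁⟩ := hyB
  obtain ⟨B₂, hB₂⟩ := hybB
  refine tendsto_zero_of_eventually_le_mul_add (q := N * L₃ / ω) (p := N / ω + 1)
    (fun t => norm_nonneg _) (fun t => norm_sub_le_of_le (hB₁ t) (hB₂ t))
    ((div_lt_one hω).2 (by linarith)) fun K hK δ hδ => ?_
  have hx : ∀ᶠ s in atTop, L₂ * ‖x s - xb s‖ ≤ δ :=
    (by simpa using hconv.const_mul L₂ :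
      Tendsto (fun s => L₂ * ‖x s - xb s‖) atTop (nhds 0)).eventually_le_const hδ
  have hGK : ∀ᶠ s in atTop, ‖G s‖ ≤ δ + L₃ * K := by
    filter_upwards [hx, hK] with s hxs hKs
    exact (norm_sub_le_of_lipschitz_left_right hg₂ hg₃ _ _ _ _).trans
      (add_le_add hxs (mul_le_mul_of_nonneg_left hKs hL₃.le))
  filter_upwards [eventually_norm_integral_Iic_le_of_exp_bound (continuous_eAt A) hA hω
    (w := G) (hgxy.sub hgxyb) hGbdd hGK hδ] with t ht
  rw [hrepr t]
  exact ht.trans_eq (by ring)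

/-- Convergence as t → ∞ of the driving functions implies convergence of the
corresponding bounded solutions of the replicator equation. -/
theorem stmt3 {m n : ℕ} (A : Matrix (Fin n) (Fin n) ℝ) (N ω M₀ L₂ L₃ : ℝ)
    (hN : 0 < N) (hω : 0 < ω) (hL₂ : 0 < L₂) (hL₃ : 0 < L₃)
    (hA : ∀ t : ℝ, 0 ≤ t → ‖eAt A t‖ ≤ N * Real.exp (-ω * t))
    (g : Eu m → Eu n → Eu n)
    (hgc : Continuous fun p : Eu m × Eu n => g p.1 p.2)
    (hgb : ∀ x y, ‖g x y‖ ≤ M₀)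
    (hg₂ : ∀ x₁ x₂ y, ‖g x₁ y - g x₂ y‖ ≤ L₂ * ‖x₁ - x₂‖)
    (hg₃ : ∀ x y₁ y₂, ‖g x y₁ - g x y₂‖ ≤ L₃ * ‖y₁ - y₂‖)
    (hcond : N * L₃ - ω < 0)
    (x xb : ℝ → Eu m) (hxc : Continuous x) (hxbc : Continuous xb)
    (hxB : ∃ H, ∀ t, ‖x t‖ ≤ H) (hxbB : ∃ H, ∀ t, ‖xb t‖ ≤ H)
    (hconv : Tendsto (fun t => ‖x t - xb t‖) atTop (nhds 0))
    (y yb : ℝ → Eu n)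
    (hyB : ∃ B, ∀ t, ‖y t‖ ≤ B) (hybB : ∃ B, ∀ t, ‖yb t‖ ≤ B)
    (hy : ∀ t, HasDerivAt y (mulA A (y t) + g (x t) (y t)) t)
    (hyint : ∀ t, y t = ∫ s in Iic t, eAt A (t - s) (g (x s) (y s)))
    (hyb : ∀ t, HasDerivAt yb (mulA A (yb t) + g (xb t) (yb t)) t)
    (hybint : ∀ t, yb t = ∫ s in Iic t, eAt A (t - s) (g (xb s) (yb s))) :
    Tendsto (fun t => ‖y t - yb t‖) atTop (nhds 0) :=
  stmt3_general A N ω M₀ L₂ L₃ hω hL₃ hA g hgc hgb hg₂ hg₃ hcond x xb hxc hxbc hconv y yb hyB hybB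
    hy hyint hyb hybint
end

section
/- Suppose F : ℝ × ℝ^m → ℝ^m is continuous and L₀-Lipschitz in x, and the set 𝒜_x of uniformly bounded (by H) solutions of x' = F(t,x) satisfies: there exists ε̄ > 0 such that for every x ∈ 𝒜_x and δ > 0 there exist x̄ ∈ 𝒜_x, t₀ ∈ ℝ and ζ ≥ t₀ with ‖x(t₀) − x̄(t₀)‖ < δ and ‖x(ζ) − x̄(ζ)‖ > ε̄. If additionally sup ‖F‖ ≤ H₀, then with Δ = ε̄/(8 H L₀) and ε = ε̄/2, for every x ∈ 𝒜_x and δ > 0 there exist x̄ ∈ 𝒜_x, t₀ ∈ ℝ and an interval J ⊂ [t₀, ∞) of length at least Δ such that ‖x(t₀) − x̄(t₀)‖ < δ and ‖x(t) − x̄(t)‖ ≥ ε for all t ∈ J. -/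
/-! The difference of two solutions bounded by `H` has velocity
`F t (x t) - F t (x̄ t)` of norm at most `L₀ ‖x t - x̄ t‖ ≤ 2 H L₀`, so on `[ζ, ζ + Δ]` it moves by
at most `2 H L₀ Δ = ε̄/4` and its norm stays above `ε̄ - ε̄/4 ≥ ε̄/2`. -/

open MeasureTheory Set Filter

lemma norm_sub_le_of_lipschitz_of_norm_le {E G : Type*} [SeminormedAddCommGroup E]
    [SeminormedAddCommGroup G] {f : E → G} {L H : ℝ} (hL : 0 ≤ L)
    (hf : ∀ u v, ‖f u - f v‖ ≤ L * ‖u - v‖) {u v : E} (hu : ‖u‖ ≤ H) (hv : ‖v‖ ≤ H) :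
    ‖f u - f v‖ ≤ 2 * H * L :=
  calc ‖f u - f v‖ ≤ L * ‖u - v‖ := hf u v
    _ ≤ L * (H + H) := mul_le_mul_of_nonneg_left ((norm_sub_le u v).trans (add_le_add hu hv)) hL
    _ = 2 * H * L := by ring

lemma norm_sub_mul_le_norm_of_norm_deriv_le {E : Type*} [NormedAddCommGroup E]
    [NormedSpace ℝ E] {g g' : ℝ → E} {C : ℝ} (hg : ∀ t, HasDerivAt g (g' t) t)
    (hg' : ∀ t, ‖g' t‖ ≤ C) {ζ t : ℝ} (ht : ζ ≤ t) :
    ‖g ζ‖ - C * (t - ζ) ≤ ‖g t‖ := by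
  have hmove : ‖g t - g ζ‖ ≤ C * (t - ζ) :=
    norm_image_sub_le_of_norm_deriv_le_segment' (fun s _ => (hg s).hasDerivWithinAt)
      (fun s _ => hg' s) t ⟨ht, le_rfl⟩
  linarith [norm_sub_norm_le (g ζ) (g t), norm_sub_rev (g ζ) (g t)]

theorem stmt8_general {m : ℕ} (F : ℝ → Eu m → Eu m) (L₀ H εb : ℝ)
    (hL₀ : 0 < L₀) (hH : 0 < H) (hεb : 0 < εb)
    (hFlip : ∀ t x₁ x₂, ‖F t x₁ - F t x₂‖ ≤ L₀ * ‖x₁ - x₂‖)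
    (Ax : Set (ℝ → Eu m))
    (hsol : ∀ x ∈ Ax, ∀ t, HasDerivAt x (F t (x t)) t)
    (hbdd : ∀ x ∈ Ax, ∀ t, ‖x t‖ ≤ H)
    (hsens : ∀ x ∈ Ax, ∀ δ > (0:ℝ), ∃ xb ∈ Ax, ∃ t₀ ζ : ℝ, t₀ ≤ ζ ∧
      ‖x t₀ - xb t₀‖ < δ ∧ εb < ‖x ζ - xb ζ‖) :
    ∀ x ∈ Ax, ∀ δ > (0:ℝ), ∃ xb ∈ Ax, ∃ t₀ c d : ℝ,
      t₀ ≤ c ∧ εb / (8 * H * L₀) ≤ d - c ∧ ‖x t₀ - xb t₀‖ < δ ∧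
      ∀ t ∈ Icc c d, εb / 2 ≤ ‖x t - xb t‖ := by
  intro x hx δ hδ
  obtain ⟨xb, hxb, t₀, ζ, hζ, hclose, hsep⟩ := hsens x hx δ hδ
  set Δ := εb / (8 * H * L₀)
  refine ⟨xb, hxb, t₀, ζ, ζ + Δ, hζ, by simp, hclose, fun t ht => ?_⟩
  have hdrift := norm_sub_mul_le_norm_of_norm_deriv_le (g := fun u => x u - xb u)
    (fun s => (hsol x hx s).sub (hsol xb hxb s))
    (fun s => norm_sub_le_of_lipschitz_of_norm_le hL₀.le (hFlip s) (hbdd x hx s) (hbdd xb hxb s))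
    ht.1
  have hdrift_small : 2 * H * L₀ * (t - ζ) ≤ εb / 4 :=
    calc 2 * H * L₀ * (t - ζ) ≤ 2 * H * L₀ * Δ := by gcongr; linarith [ht.2]
      _ = εb / 4 := by unfold Δ; field_simp; ring
  linarith

/-- Pointwise sensitivity of the set 𝒜ₓ extends to sensitivity on intervals of
length Δ = ε̄/(8 H L₀), with separation constant ε = ε̄/2. -/
theorem stmt8 {m : ℕ} (F : ℝ → Eu m → Eu m) (L₀ H H₀ εb : ℝ)
    (hL₀ : 0 < L₀) (hH : 0 < H) (hεb : 0 < εb)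
    (hFc : Continuous fun p : ℝ × Eu m => F p.1 p.2)
    (hFlip : ∀ t x₁ x₂, ‖F t x₁ - F t x₂‖ ≤ L₀ * ‖x₁ - x₂‖)
    (hFb : ∀ t x, ‖F t x‖ ≤ H₀)
    (Ax : Set (ℝ → Eu m))
    (hsol : ∀ x ∈ Ax, ∀ t, HasDerivAt x (F t (x t)) t)
    (hbdd : ∀ x ∈ Ax, ∀ t, ‖x t‖ ≤ H)
    (hsens : ∀ x ∈ Ax, ∀ δ > (0:ℝ), ∃ xb ∈ Ax, ∃ t₀ ζ : ℝ, t₀ ≤ ζ ∧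
      ‖x t₀ - xb t₀‖ < δ ∧ εb < ‖x ζ - xb ζ‖) :
    ∀ x ∈ Ax, ∀ δ > (0:ℝ), ∃ xb ∈ Ax, ∃ t₀ c d : ℝ,
      t₀ ≤ c ∧ εb / (8 * H * L₀) ≤ d - c ∧ ‖x t₀ - xb t₀‖ < δ ∧
      ∀ t ∈ Icc c d, εb / 2 ≤ ‖x t - xb t‖ :=
  stmt8_general F L₀ H εb hL₀ hH hεb hFlip Ax hsol hbdd hsens
end

section
/- Let y, ȳ : [θ, θ+τ] → ℝ^n be continuously differentiable, bounded by M, satisfying y' = Ay + g(x(t), y) and ȳ' = Aȳ + g(x̄(t), ȳ), and suppose ‖∫_θ^{θ+τ} [g(x(s), y(s)) − g(x̄(s), y(s))] ds‖ > τ L₁ ε₀ / (2n), where g is L₃-Lipschitz in its second variable. Then max_{t ∈ [θ, θ+τ]} ‖y(t) − ȳ(t)‖ > τ L₁ ε₀ / (2n [2 + τ(L₃ + ‖A‖)]). -/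
/-!
With `u = y - ȳ`, the fundamental theorem of calculus writes `∫ (g(x, y) - g(x̄, y))` as
`u(θ + τ) - u(θ)` minus the integral of `A u + g(x̄, y) - g(x̄, ȳ)`, an integrand of norm at most
`(L₃ + ‖A‖) ‖u‖`. So the integral has norm at most `(2 + τ (L₃ + ‖A‖)) max ‖u‖`.
-/

open MeasureTheory Set Filter

theorem norm_integral_le_of_hasDerivAt_of_norm_sub_le {E : Type*} [NormedAddCommGroup E]
    [NormedSpace ℝ E] [CompleteSpace E] {u F K : ℝ → E} {a b c D : ℝ} (hab : a ≤ b)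
    (hc : 0 ≤ c) (hu : ∀ t ∈ Icc a b, HasDerivAt u (F t) t)
    (hF : IntervalIntegrable F volume a b) (hK : IntervalIntegrable K volume a b)
    (hFK : ∀ t ∈ Icc a b, ‖F t - K t‖ ≤ c * ‖u t‖) (huD : ∀ t ∈ Icc a b, ‖u t‖ ≤ D) :
    ‖∫ t in a..b, K t‖ ≤ D * (2 + (b - a) * c) := by
  have hK_eq : ∫ t in a..b, K t = (u b - u a) - ∫ t in a..b, (F t - K t) := by
    rw [intervalIntegral.integral_sub hF hK,
      intervalIntegral.integral_eq_sub_of_hasDerivAt (by rwa [uIcc_of_le hab]) hF]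
    abel
  have hFK_int : ‖∫ t in a..b, (F t - K t)‖ ≤ c * D * (b - a) := by
    rw [← abs_of_nonneg (sub_nonneg.2 hab)]
    exact intervalIntegral.norm_integral_le_of_norm_le_const fun t ht =>
        have ht : t ∈ Icc a b := by rw [uIoc_of_le hab] at ht; exact Ioc_subset_Icc_self ht
        (hFK t ht).trans (mul_le_mul_of_nonneg_left (huD t ht) hc)
  calc ‖∫ t in a..b, K t‖
      ≤ ‖u b‖ + ‖u a‖ + ‖∫ t in a..b, (F t - K t)‖ := by
        rw [hK_eq]; exact (norm_sub_le _ _).trans (add_le_add_left (norm_sub_le _ _) _)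
    _ ≤ D + D + c * D * (b - a) :=
        add_le_add (add_le_add (huD b ⟨hab, le_rfl⟩) (huD a ⟨le_rfl, hab⟩)) hFK_int
    _ = D * (2 + (b - a) * c) := by ring

theorem norm_map_add_sub_map_add_sub_le {X E : Type*} [NormedAddCommGroup E]
    [NormedSpace ℝ E] (T : E →L[ℝ] E) {g : X → E → E} {L : ℝ}
    (hg : ∀ x y₁ y₂, ‖g x y₁ - g x y₂‖ ≤ L * ‖y₁ - y₂‖) (x x' : X) (y y' : E) :
    ‖T y + g x y - (T y' + g x' y') - (g x y - g x' y)‖ ≤ (L + ‖T‖) * ‖y - y'‖ :=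
  calc _ = ‖T (y - y') + (g x' y - g x' y')‖ := by rw [map_sub]; congr 1; abel
    _ ≤ ‖T‖ * ‖y - y'‖ + L * ‖y - y'‖ :=
        (norm_add_le _ _).trans (add_le_add (T.le_opNorm _) (hg _ _ _))
    _ = (L + ‖T‖) * ‖y - y'‖ := by ring

theorem stmt13_general {m n : ℕ} (A : Matrix (Fin n) (Fin n) ℝ)
    (L₁ L₃ ε₀ τ θ : ℝ)
    (hL₃ : 0 < L₃) (hτ : 0 < τ)
    (g : Eu m → Eu n → Eu n)
    (hgc : Continuous fun p : Eu m × Eu n => g p.1 p.2)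
    (hg₃ : ∀ x y₁ y₂, ‖g x y₁ - g x y₂‖ ≤ L₃ * ‖y₁ - y₂‖)
    (x xb : ℝ → Eu m) (hxc : Continuous x) (hxbc : Continuous xb)
    (y yb : ℝ → Eu n)
    (hy : ∀ t ∈ Icc θ (θ + τ), HasDerivAt y (mulA A (y t) + g (x t) (y t)) t)
    (hyd : ∀ t ∈ Icc θ (θ + τ), HasDerivAt yb (mulA A (yb t) + g (xb t) (yb t)) t)
    (hint : τ * L₁ * ε₀ / (2 * (n : ℝ)) <
      ‖∫ s in θ..(θ + τ), (g (x s) (y s) - g (xb s) (y s))‖) :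
    ∃ t ∈ Icc θ (θ + τ),
      τ * L₁ * ε₀ / (2 * (n : ℝ) * (2 + τ * (L₃ + ‖mulA A‖))) < ‖y t - yb t‖ := by
  by_contra! hsmall
  have hθτ : θ ≤ θ + τ := by linarith
  have hyc : ContinuousOn y (Icc θ (θ + τ)) :=
    fun t ht => (hy t ht).continuousAt.continuousWithinAt
  have hybc : ContinuousOn yb (Icc θ (θ + τ)) :=
    fun t ht => (hyd t ht).continuousAt.continuousWithinAt
  have hg_comp {z : ℝ → Eu m} {w : ℝ → Eu n} (hz : Continuous z)
      (hw : ContinuousOn w (Icc θ (θ + τ))) :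
      ContinuousOn (fun s => g (z s) (w s)) (Icc θ (θ + τ)) :=
    hgc.comp_continuousOn (hz.continuousOn.prodMk hw)
  have hF : ContinuousOn
      (fun t => mulA A (y t) + g (x t) (y t) - (mulA A (yb t) + g (xb t) (yb t)))
      (Icc θ (θ + τ)) :=
    (((mulA A).continuous.comp_continuousOn hyc).add (hg_comp hxc hyc)).sub
      (((mulA A).continuous.comp_continuousOn hybc).add (hg_comp hxbc hybc))
  have hK : ContinuousOn (fun t => g (x t) (y t) - g (xb t) (y t)) (Icc θ (θ + τ)) :=
    (hg_comp hxc hyc).sub (hg_comp hxbc hyc)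
  have hc : 0 ≤ L₃ + ‖mulA A‖ := by positivity
  have hbound := norm_integral_le_of_hasDerivAt_of_norm_sub_le hθτ hc
    (fun t ht => (hy t ht).sub (hyd t ht)) (hF.intervalIntegrable_of_Icc hθτ)
    (hK.intervalIntegrable_of_Icc hθτ)
    (fun t _ => norm_map_add_sub_map_add_sub_le (mulA A) hg₃ _ _ _ _) hsmall
  have hden : 2 + τ * (L₃ + ‖mulA A‖) ≠ 0 := by positivity
  rw [add_sub_cancel_left, div_mul_eq_mul_div, mul_div_mul_right _ _ hden] at hbound
  exact hint.not_ge hbound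

/-- If the integral of g(x,y) − g(x̄,y) over [θ, θ+τ] is large, then
‖y − ȳ‖ is large somewhere on [θ, θ+τ]. -/
theorem stmt13 {m n : ℕ} (hn : 0 < n) (A : Matrix (Fin n) (Fin n) ℝ)
    (L₁ L₃ ε₀ τ θ M : ℝ)
    (hL₁ : 0 < L₁) (hL₃ : 0 < L₃) (hε₀ : 0 < ε₀) (hτ : 0 < τ)
    (g : Eu m → Eu n → Eu n)
    (hgc : Continuous fun p : Eu m × Eu n => g p.1 p.2)
    (hg₃ : ∀ x y₁ y₂, ‖g x y₁ - g x y₂‖ ≤ L₃ * ‖y₁ - y₂‖)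
    (x xb : ℝ → Eu m) (hxc : Continuous x) (hxbc : Continuous xb)
    (y yb : ℝ → Eu n)
    (hy : ∀ t ∈ Icc θ (θ + τ), HasDerivAt y (mulA A (y t) + g (x t) (y t)) t)
    (hyd : ∀ t ∈ Icc θ (θ + τ), HasDerivAt yb (mulA A (yb t) + g (xb t) (yb t)) t)
    (hyM : ∀ t ∈ Icc θ (θ + τ), ‖y t‖ ≤ M ∧ ‖yb t‖ ≤ M)
    (hint : τ * L₁ * ε₀ / (2 * (n : ℝ)) <
      ‖∫ s in θ..(θ + τ), (g (x s) (y s) - g (xb s) (y s))‖) :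
    ∃ t ∈ Icc θ (θ + τ),
      τ * L₁ * ε₀ / (2 * (n : ℝ) * (2 + τ * (L₃ + ‖mulA A‖))) < ‖y t - yb t‖ :=
  stmt13_general A L₁ L₃ ε₀ τ θ hL₃ hτ g hgc hg₃ x xb hxc hxbc y yb hy hyd hint
end

section
/- In the setting of the previous estimate, suppose additionally that ‖y(t)‖, ‖ȳ(t)‖ ≤ M and that ‖y'(t)‖, ‖ȳ'(t)‖ ≤ M‖A‖ + M₀ on [θ, θ+τ], where M₀ bounds g. If max_{t∈[θ,θ+τ]} ‖y(t) − ȳ(t)‖ > τ L₁ ε₀ / (2n[2 + τ(L₃ + ‖A‖)]), then there exists a subinterval J¹ ⊂ [θ, θ+τ] of length τ¹ = min{ τ/2, τ L₁ ε₀ / (8n (M‖A‖ + M₀)[2 + τ(L₃ + ‖A‖)]) } on which ‖y(t) − ȳ(t)‖ > τ L₁ ε₀ / (4n[2 + τ(L₃ + ‖A‖)]) for all t ∈ J¹. -/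
/-!
The difference `w = y - ȳ` has derivative `(Ay + g(x, y)) - (Aȳ + g(x̄, ȳ))`, of norm at most
`2(M‖A‖ + M₀)`, so `w` is `2(M‖A‖ + M₀)`-Lipschitz on `[θ, θ + τ]`. On a subinterval of length
`τ¹ ≤ τ / 2` containing a point `η` where `‖w η‖` exceeds twice the target bound, and lying on the
side of `η` where `[θ, θ + τ]` has room, `‖w‖` therefore drops by at most
`2(M‖A‖ + M₀) τ¹`, which the choice of `τ¹` makes at most the target bound.
-/

open MeasureTheory Set Filter

theorem exists_Icc_subset_Icc_forall_abs_sub_le {a b η δ : ℝ} (hη : η ∈ Icc a b)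
    (hδ : δ ≤ (b - a) / 2) :
    ∃ θ₁, Icc θ₁ (θ₁ + δ) ⊆ Icc a b ∧ ∀ t ∈ Icc θ₁ (θ₁ + δ), |t - η| ≤ δ := by
  obtain ⟨ha, hb⟩ := hη
  by_cases hmid : η ≤ (a + b) / 2
  · refine ⟨η, Icc_subset_Icc ha (by linarith), fun t ⟨h₁, h₂⟩ => abs_le.mpr ⟨?_, ?_⟩⟩ <;>
      linarith
  · refine ⟨η - δ, Icc_subset_Icc (by linarith) (by linarith),
      fun t ⟨h₁, h₂⟩ => abs_le.mpr ⟨?_, ?_⟩⟩ <;> linarith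

theorem exists_Icc_forall_lt_norm {E : Type*} [SeminormedAddCommGroup E] {f : ℝ → E}
    {a b C c δ η : ℝ} (hf : ∀ s ∈ Icc a b, ∀ t ∈ Icc a b, ‖f t - f s‖ ≤ C * ‖t - s‖)
    (hC : 0 ≤ C) (hη : η ∈ Icc a b) (hδ : δ ≤ (b - a) / 2) (hCδ : C * δ ≤ c)
    (hfη : 2 * c < ‖f η‖) :
    ∃ θ₁, Icc θ₁ (θ₁ + δ) ⊆ Icc a b ∧ ∀ t ∈ Icc θ₁ (θ₁ + δ), c < ‖f t‖ := by
  obtain ⟨θ₁, hsub, hnear⟩ := exists_Icc_subset_Icc_forall_abs_sub_le hη hδ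
  refine ⟨θ₁, hsub, fun t ht => ?_⟩
  have hdist : ‖η - t‖ ≤ δ := by rw [Real.norm_eq_abs, abs_sub_comm]; exact hnear t ht
  calc c < ‖f η‖ - C * δ := by linarith
    _ ≤ ‖f η‖ - C * ‖η - t‖ := by gcongr
    _ ≤ ‖f η‖ - ‖f η - f t‖ := by linarith [hf t (hsub ht) η hη]
    _ ≤ ‖f t‖ := by linarith [norm_sub_norm_le (f η) (f t)]

theorem norm_map_add_le {𝕜 E F : Type*} [NontriviallyNormedField 𝕜]
    [SeminormedAddCommGroup E] [NormedSpace 𝕜 E] [SeminormedAddCommGroup F] [NormedSpace 𝕜 F]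
    (L : E →L[𝕜] F) {u : E} {v : F} {M M₀ : ℝ}
    (hu : ‖u‖ ≤ M) (hv : ‖v‖ ≤ M₀) : ‖L u + v‖ ≤ M * ‖L‖ + M₀ :=
  calc ‖L u + v‖ ≤ ‖L‖ * ‖u‖ + ‖v‖ := (norm_add_le _ _).trans (by gcongr; exact L.le_opNorm u)
    _ ≤ M * ‖L‖ + M₀ := by nlinarith [norm_nonneg L]

theorem stmt14_general {m n : ℕ} (A : Matrix (Fin n) (Fin n) ℝ)
    (L₁ L₃ ε₀ τ θ M M₀ : ℝ)
    (hM : 0 < M) (hM₀ : 0 < M₀)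
    (g : Eu m → Eu n → Eu n)
    (hgb : ∀ x y, ‖g x y‖ ≤ M₀)
    (x xb : ℝ → Eu m)
    (y yb : ℝ → Eu n)
    (hy : ∀ t ∈ Icc θ (θ + τ), HasDerivAt y (mulA A (y t) + g (x t) (y t)) t)
    (hyd : ∀ t ∈ Icc θ (θ + τ), HasDerivAt yb (mulA A (yb t) + g (xb t) (yb t)) t)
    (hyM : ∀ t ∈ Icc θ (θ + τ), ‖y t‖ ≤ M ∧ ‖yb t‖ ≤ M)
    (hmax : ∃ η ∈ Icc θ (θ + τ),
      τ * L₁ * ε₀ / (2 * (n : ℝ) * (2 + τ * (L₃ + ‖mulA A‖))) < ‖y η - yb η‖) :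
    ∃ θ₁ : ℝ,
      Icc θ₁ (θ₁ + min (τ / 2)
        (τ * L₁ * ε₀ / (8 * (n : ℝ) * (M * ‖mulA A‖ + M₀) * (2 + τ * (L₃ + ‖mulA A‖)))))
        ⊆ Icc θ (θ + τ) ∧
      ∀ t ∈ Icc θ₁ (θ₁ + min (τ / 2)
        (τ * L₁ * ε₀ / (8 * (n : ℝ) * (M * ‖mulA A‖ + M₀) * (2 + τ * (L₃ + ‖mulA A‖))))),
        τ * L₁ * ε₀ / (4 * (n : ℝ) * (2 + τ * (L₃ + ‖mulA A‖))) < ‖y t - yb t‖ := by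
  obtain ⟨η, hη, hfar⟩ := hmax
  set K := M * ‖mulA A‖ + M₀
  have hK : 0 < K := by positivity
  have hlip : ∀ s ∈ Icc θ (θ + τ), ∀ t ∈ Icc θ (θ + τ),
      ‖(y t - yb t) - (y s - yb s)‖ ≤ 2 * K * ‖t - s‖ := fun s hs t ht =>
    (convex_Icc θ (θ + τ)).norm_image_sub_le_of_norm_hasDerivWithin_le
      (fun u hu => ((hy u hu).sub (hyd u hu)).hasDerivWithinAt)
      (fun u hu => by
        linarith [norm_sub_le (mulA A (y u) + g (x u) (y u)) (mulA A (yb u) + g (xb u) (yb u)),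
          norm_map_add_le (mulA A) (hyM u hu).1 (hgb (x u) (y u)),
          norm_map_add_le (mulA A) (hyM u hu).2 (hgb (xb u) (yb u))])
      hs ht
  set D := 2 + τ * (L₃ + ‖mulA A‖)
  refine exists_Icc_forall_lt_norm hlip (by positivity) hη
    ((min_le_left _ _).trans_eq (by ring)) ?_ ?_
  · calc 2 * K * min (τ / 2) (τ * L₁ * ε₀ / (8 * n * K * D))
        ≤ 2 * K * (τ * L₁ * ε₀ / (4 * n * D) / (2 * K)) := by
          gcongr
          exact (min_le_right _ _).trans_eq (by rw [div_div]; congr 1; ring)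
      _ = τ * L₁ * ε₀ / (4 * n * D) := mul_div_cancel₀ _ (by positivity)
  · convert hfar using 1
    ring_nf

/-- A pointwise lower bound on ‖y − ȳ‖ propagates to a subinterval of length
τ¹ with lower bound halved, using the derivative bound M‖A‖ + M₀. -/
theorem stmt14 {m n : ℕ} (hn : 0 < n) (A : Matrix (Fin n) (Fin n) ℝ)
    (L₁ L₃ ε₀ τ θ M M₀ : ℝ)
    (hL₁ : 0 < L₁) (hL₃ : 0 < L₃) (hε₀ : 0 < ε₀) (hτ : 0 < τ)
    (hM : 0 < M) (hM₀ : 0 < M₀)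
    (g : Eu m → Eu n → Eu n)
    (hgc : Continuous fun p : Eu m × Eu n => g p.1 p.2)
    (hgb : ∀ x y, ‖g x y‖ ≤ M₀)
    (hg₃ : ∀ x y₁ y₂, ‖g x y₁ - g x y₂‖ ≤ L₃ * ‖y₁ - y₂‖)
    (x xb : ℝ → Eu m) (hxc : Continuous x) (hxbc : Continuous xb)
    (y yb : ℝ → Eu n)
    (hy : ∀ t ∈ Icc θ (θ + τ), HasDerivAt y (mulA A (y t) + g (x t) (y t)) t)
    (hyd : ∀ t ∈ Icc θ (θ + τ), HasDerivAt yb (mulA A (yb t) + g (xb t) (yb t)) t)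
    (hyM : ∀ t ∈ Icc θ (θ + τ), ‖y t‖ ≤ M ∧ ‖yb t‖ ≤ M)
    (hmax : ∃ η ∈ Icc θ (θ + τ),
      τ * L₁ * ε₀ / (2 * (n : ℝ) * (2 + τ * (L₃ + ‖mulA A‖))) < ‖y η - yb η‖) :
    ∃ θ₁ : ℝ,
      Icc θ₁ (θ₁ + min (τ / 2)
        (τ * L₁ * ε₀ / (8 * (n : ℝ) * (M * ‖mulA A‖ + M₀) * (2 + τ * (L₃ + ‖mulA A‖)))))
        ⊆ Icc θ (θ + τ) ∧
      ∀ t ∈ Icc θ₁ (θ₁ + min (τ / 2)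
        (τ * L₁ * ε₀ / (8 * (n : ℝ) * (M * ‖mulA A‖ + M₀) * (2 + τ * (L₃ + ‖mulA A‖))))),
        τ * L₁ * ε₀ / (4 * (n : ℝ) * (2 + τ * (L₃ + ‖mulA A‖))) < ‖y t - yb t‖ :=
  stmt14_general A L₁ L₃ ε₀ τ θ M M₀ hM hM₀ g hgb x xb y yb hy hyd hyM hmax
end

section
/- Convolution Gronwall lemma: let v : [R₁, ∞) → [0, ∞) be continuous and bounded and suppose v(t) ≤ c e^{-ω(t−R₁)} + ∫_{R₁}^{t} e^{-ω(t−s)} (k v(s) + d) ds for all t ≥ R₁, where c, d ≥ 0 and 0 < k < ω. Then v(t) ≤ c e^{(k−ω)(t−R₁)} + (d/(ω − k)) (1 − e^{(k−ω)(t−R₁)}) for all t ≥ R₁; in particular limsup_{t→∞} v(t) ≤ d/(ω − k). -/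
/-!
For `u t = e^{ω (t - R₁)} v t` the hypothesis becomes
`u t ≤ y t := c + ∫ (k u + d e^{ω (s - R₁)})`, so `y' ≤ k y + d e^{ω (t - R₁)}` because `k ≥ 0`.
Comparing `y` with the explicit solution of the linear equation `y' = k y + d e^{ω (t - R₁)}`
bounds `u`, hence `v`; the bound on `v` tends to `d / (ω - k)` since `k < ω`.
-/

open MeasureTheory Set Filter Real Topology

theorem le_of_hasDerivAt_le_mul_add_exp {y y' : ℝ → ℝ} {a b k ω d : ℝ} (hkω : k ≠ ω)
    (hab : a ≤ b) (hy : ContinuousOn y (Icc a b)) (hy' : ∀ x ∈ Ioo a b, HasDerivAt y (y' x) x)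
    (bound : ∀ x ∈ Ioo a b, y' x ≤ k * y x + d * exp (ω * (x - a))) :
    y b ≤ exp (k * (b - a)) * y a + d / (ω - k) * (exp (ω * (b - a)) - exp (k * (b - a))) := by
  have hωk : ω - k ≠ 0 := sub_ne_zero.mpr hkω.symm
  -- `g` is constant along solutions of `y' = k y + d e^{ω (x - a)}`
  set g : ℝ → ℝ := fun x ↦
    exp (-k * (x - a)) * y x - d / (ω - k) * exp ((ω - k) * (x - a))
  have hg' : ∀ x ∈ Ioo a b, HasDerivAt g (exp (-k * (x - a)) * (y' x - k * y x)
      - d * exp ((ω - k) * (x - a))) x := by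
    intro x hx
    have e₁ := (((hasDerivAt_id x).sub_const a).const_mul (-k)).exp
    have e₂ := (((hasDerivAt_id x).sub_const a).const_mul (ω - k)).exp
    refine ((e₁.mul (hy' x hx)).sub (e₂.const_mul (d / (ω - k)))).congr_deriv ?_
    simp only [id]
    field_simp
    ring
  have hg'_nonpos : ∀ x ∈ Ioo a b, exp (-k * (x - a)) * (y' x - k * y x)
      - d * exp ((ω - k) * (x - a)) ≤ 0 := by
    intro x hx
    have : exp (-k * (x - a)) * (y' x - k * y x) ≤
        exp (-k * (x - a)) * (d * exp (ω * (x - a))) :=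
      mul_le_mul_of_nonneg_left (by linarith [bound x hx]) (exp_pos _).le
    rwa [mul_left_comm, ← exp_add, show -k * (x - a) + ω * (x - a) = (ω - k) * (x - a) by ring,
      ← sub_nonpos] at this
  have hg_anti : AntitoneOn g (Icc a b) := by
    refine antitoneOn_of_deriv_nonpos (convex_Icc a b) ?_ ?_ ?_
    · exact ((continuous_exp.comp (by fun_prop)).continuousOn.mul hy).sub
        (continuous_const.mul (continuous_exp.comp (by fun_prop))).continuousOn
    · rw [interior_Icc]
      exact fun x hx ↦ (hg' x hx).differentiableAt.differentiableWithinAt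
    · rw [interior_Icc]
      exact fun x hx ↦ (hg' x hx).deriv ▸ hg'_nonpos x hx
  have hgb : g b ≤ g a := hg_anti (left_mem_Icc.mpr hab) (right_mem_Icc.mpr hab) hab
  have hscale := mul_le_mul_of_nonneg_left hgb (exp_pos (k * (b - a))).le
  simp only [g, sub_self, mul_zero, exp_zero, one_mul, mul_one] at hscale
  have e₁ : exp (k * (b - a)) * exp (-k * (b - a)) = 1 := by rw [← exp_add]; ring_nf; simp
  have e₂ : exp (k * (b - a)) * exp ((ω - k) * (b - a)) = exp (ω * (b - a)) := by
    rw [← exp_add]; ring_nf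
  linear_combination hscale - y b * e₁ + d / (ω - k) * e₂

theorem le_of_le_add_integral_mul_add_exp {u : ℝ → ℝ} {a b c k ω d : ℝ} (hk : 0 ≤ k)
    (hkω : k ≠ ω) (hab : a ≤ b) (hu : ContinuousOn u (Icc a b))
    (h : ∀ t ∈ Icc a b, u t ≤ c + ∫ s in a..t, (k * u s + d * exp (ω * (s - a)))) :
    u b ≤ exp (k * (b - a)) * c + d / (ω - k) * (exp (ω * (b - a)) - exp (k * (b - a))) := by
  set F : ℝ → ℝ := fun s ↦ k * u s + d * exp (ω * (s - a))
  have hF : ContinuousOn F (Icc a b) :=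
    (continuousOn_const.mul hu).add
      (continuous_const.mul (continuous_exp.comp (by fun_prop))).continuousOn
  set y : ℝ → ℝ := fun t ↦ c + ∫ s in a..t, F s
  have hy : ContinuousOn y (Icc a b) := by
    have := intervalIntegral.continuousOn_primitive_interval' (μ := volume)
      (hF.intervalIntegrable_of_Icc hab) (left_mem_uIcc (a := a) (b := b))
    rw [uIcc_of_le hab] at this
    exact continuousOn_const.add this
  have hy' : ∀ x ∈ Ioo a b, HasDerivAt y (F x) x := fun x hx ↦
    (intervalIntegral.integral_hasDerivAt_right
      ((hF.mono (Icc_subset_Icc_right hx.2.le)).intervalIntegrable_of_Icc hx.1.le)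
      ((hF.mono Ioo_subset_Icc_self).stronglyMeasurableAtFilter isOpen_Ioo x hx)
      (hF.continuousAt (Icc_mem_nhds hx.1 hx.2))).const_add c
  have hbound : ∀ x ∈ Ioo a b, F x ≤ k * y x + d * exp (ω * (x - a)) := fun x hx ↦
    add_le_add_left (mul_le_mul_of_nonneg_left (h x (Ioo_subset_Icc_self hx)) hk) _
  have hya : y a = c := by simp [y]
  calc u b ≤ y b := h b (right_mem_Icc.mpr hab)
    _ ≤ _ := hya ▸ le_of_hasDerivAt_le_mul_add_exp hkω hab hy hy' hbound

theorem le_of_le_add_integral_exp_kernel {v : ℝ → ℝ} {R c k ω d t : ℝ} (hk : 0 ≤ k)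
    (hkω : k ≠ ω) (hRt : R ≤ t) (hv : ContinuousOn v (Icc R t))
    (h : ∀ s ∈ Icc R t, v s ≤ c * exp (-ω * (s - R)) +
      ∫ r in R..s, exp (-ω * (s - r)) * (k * v r + d)) :
    v t ≤ c * exp ((k - ω) * (t - R)) + d / (ω - k) * (1 - exp ((k - ω) * (t - R))) := by
  have hu : ContinuousOn (fun s ↦ exp (ω * (s - R)) * v s) (Icc R t) :=
    (continuous_exp.comp (by fun_prop)).continuousOn.mul hv
  have hhu : ∀ s ∈ Icc R t, exp (ω * (s - R)) * v s ≤
      c + ∫ r in R..s, (k * (exp (ω * (r - R)) * v r) + d * exp (ω * (r - R))) := by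
    intro s hs
    calc exp (ω * (s - R)) * v s
        ≤ exp (ω * (s - R)) * (c * exp (-ω * (s - R)) +
            ∫ r in R..s, exp (-ω * (s - r)) * (k * v r + d)) :=
          mul_le_mul_of_nonneg_left (h s hs) (exp_pos _).le
      _ = c + ∫ r in R..s, (k * (exp (ω * (r - R)) * v r) + d * exp (ω * (r - R))) := by
          rw [mul_add, ← intervalIntegral.integral_const_mul, mul_left_comm, ← exp_add]
          congr 1
          · rw [neg_mul, add_neg_cancel, exp_zero, mul_one]
          · refine intervalIntegral.integral_congr fun r _ ↦ ?_
            rw [← mul_assoc, ← exp_add,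
              show ω * (s - R) + -ω * (s - r) = ω * (r - R) by ring]
            ring
  have key := le_of_le_add_integral_mul_add_exp hk hkω hRt hu hhu
  have e₁ : exp (-ω * (t - R)) * exp (ω * (t - R)) = 1 := by rw [← exp_add]; ring_nf; simp
  have e₂ : exp (-ω * (t - R)) * exp (k * (t - R)) = exp ((k - ω) * (t - R)) := by
    rw [← exp_add]; ring_nf
  have hscale := mul_le_mul_of_nonneg_left key (exp_pos (-ω * (t - R))).le
  linear_combination hscale + (d / (ω - k) - v t) * e₁ + (c - d / (ω - k)) * e₂

theorem stmt18_general (R₁ ω k c d : ℝ) (hk : 0 < k) (hkω : k < ω)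
    (v : ℝ → ℝ) (hv : ContinuousOn v (Ici R₁))
    (hv0 : ∀ t ≥ R₁, 0 ≤ v t)
    (h : ∀ t ≥ R₁, v t ≤ c * Real.exp (-ω * (t - R₁)) +
      ∫ s in R₁..t, Real.exp (-ω * (t - s)) * (k * v s + d)) :
    (∀ t ≥ R₁, v t ≤ c * Real.exp ((k - ω) * (t - R₁)) +
      d / (ω - k) * (1 - Real.exp ((k - ω) * (t - R₁)))) ∧
    Filter.limsup v Filter.atTop ≤ d / (ω - k) := by
  have bound : ∀ t ≥ R₁, v t ≤ c * exp ((k - ω) * (t - R₁)) +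
      d / (ω - k) * (1 - exp ((k - ω) * (t - R₁))) := fun t ht ↦
    le_of_le_add_integral_exp_kernel hk.le hkω.ne ht (hv.mono Icc_subset_Ici_self)
      fun s hs ↦ h s hs.1
  refine ⟨bound, ?_⟩
  have hexp : Tendsto (fun t ↦ exp ((k - ω) * (t - R₁))) atTop (𝓝 0) :=
    tendsto_exp_atBot.comp <|
      (tendsto_atTop_add_const_right _ (-R₁) tendsto_id).const_mul_atTop_of_neg (sub_neg.mpr hkω)
  have hlim : Tendsto (fun t ↦ c * exp ((k - ω) * (t - R₁)) +
      d / (ω - k) * (1 - exp ((k - ω) * (t - R₁)))) atTop (𝓝 (d / (ω - k))) := by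
    simpa using (hexp.const_mul c).add
      (((tendsto_const_nhds (x := (1 : ℝ))).sub hexp).const_mul (d / (ω - k)))
  calc limsup v atTop ≤ limsup _ atTop :=
        limsup_le_limsup ((eventually_ge_atTop R₁).mono bound)
          (isCoboundedUnder_le_of_eventually_le _ ((eventually_ge_atTop R₁).mono hv0))
          hlim.isBoundedUnder_le
    _ = d / (ω - k) := hlim.limsup_eq

/-- Convolution Gronwall lemma with exponential kernel. -/
theorem stmt18 (R₁ ω k c d : ℝ) (hc : 0 ≤ c) (hd : 0 ≤ d) (hk : 0 < k) (hkω : k < ω)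
    (v : ℝ → ℝ) (hv : ContinuousOn v (Ici R₁))
    (hvb : ∃ B, ∀ t ≥ R₁, v t ≤ B) (hv0 : ∀ t ≥ R₁, 0 ≤ v t)
    (h : ∀ t ≥ R₁, v t ≤ c * Real.exp (-ω * (t - R₁)) +
      ∫ s in R₁..t, Real.exp (-ω * (t - s)) * (k * v s + d)) :
    (∀ t ≥ R₁, v t ≤ c * Real.exp ((k - ω) * (t - R₁)) +
      d / (ω - k) * (1 - Real.exp ((k - ω) * (t - R₁)))) ∧
    Filter.limsup v Filter.atTop ≤ d / (ω - k) :=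
  stmt18_general R₁ ω k c d hk hkω v hv hv0 h
end
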